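/- The set of half-automorphisms of a group G forms a group under composition. -/

import Mathlib

/-!
The identity and composites of half-homomorphisms are clearly half-homomorphisms, so the point is
that the inverse `e.symm` of a half-automorphism `e` is one. Writing `x = e a`, `y = e b`, this
fails only if `e (a * b) = e (b * a) = y * x ≠ x * y`; then `a` and `b` commute while `e a` and
`e b` do not. This cannot happen: with `z = e.symm (x * y)`, comparing the values of `e` on a few
words in `a`, `b`, `z` (each of which `e` must send to one of two products) forces `x * y = y * x`.
-/

def IsHalfHom {G H : Type*} [Mul G] [Mul H] (f : G → H) : Prop :=
  ∀ x y, f (x * y) = f x * f y ∨ f (x * y) = f y * f x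

namespace IsHalfHom

section Mul

variable {G H K : Type*} [Mul G] [Mul H] [Mul K]

protected theorem id : IsHalfHom (id : G → G) := fun _ _ => .inl rfl

theorem comp {g : H → K} {f : G → H} (hg : IsHalfHom g) (hf : IsHalfHom f) :
    IsHalfHom (g ∘ f) := by
  intro x y
  rcases hf x y with h | h <;> simp only [Function.comp_apply, h]
  · exact hg (f x) (f y)
  · exact (hg (f y) (f x)).symm

theorem map_mul_self {f : G → H} (hf : IsHalfHom f) (g : G) : f (g * g) = f g * f g :=
  (hf g g).elim id id

theorem apply_mul_eq_right_of_ne {f : G → H} (hf : IsHalfHom f) (hinj : Function.Injective f)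
    {u v w : G} (hw : f w = f u * f v) (hne : u * v ≠ w) : f (u * v) = f v * f u :=
  (hf u v).resolve_left fun h => hne (hinj (h.trans hw.symm))

theorem apply_mul_eq_left_of_ne {f : G → H} (hf : IsHalfHom f) (hinj : Function.Injective f)
    {u v w : G} (hw : f w = f v * f u) (hne : u * v ≠ w) : f (u * v) = f u * f v :=
  (hf u v).resolve_right fun h => hne (hinj (h.trans hw.symm))

end Mul

theorem map_one {G H : Type*} [MulOneClass G] [LeftCancelMonoid H] {f : G → H}
    (hf : IsHalfHom f) : f 1 = 1 :=
  left_eq_mul.mp (by rw [← hf.map_mul_self, mul_one])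

section Group

variable {G H : Type*} [Group G] [Group H]

theorem map_inv {f : G → H} (hf : IsHalfHom f) (g : G) : f g⁻¹ = (f g)⁻¹ := by
  rcases hf g g⁻¹ with h | h <;> rw [mul_inv_cancel, hf.map_one] at h
  · exact eq_inv_of_mul_eq_one_right h.symm
  · exact eq_inv_of_mul_eq_one_left h.symm

variable {e : G ≃ H}

theorem commute_apply_of_apply_mul_rev (he : IsHalfHom e) {a b : G} (hab : Commute a b)
    (hrev : e (a * b) = e b * e a) : Commute (e a) (e b) := by
  by_contra hxy
  obtain ⟨z, hz⟩ := e.surjective (e a * e b)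
  have hz_ne : z ≠ a * b := fun h => hxy (by rw [h, hrev] at hz; exact hz.symm)
  have hbz : Commute b z := by
    have hw : e a = e z * e b⁻¹ := by rw [hz, he.map_inv, mul_inv_cancel_right]
    have hl := he.apply_mul_eq_left_of_ne e.injective (u := b⁻¹) hw fun h =>
      hz_ne (by rw [hab.eq]; exact inv_mul_eq_iff_eq_mul.mp h)
    have hr := he.apply_mul_eq_right_of_ne e.injective (v := b⁻¹) hw fun h =>
      hz_ne (mul_inv_eq_iff_eq_mul.mp h)
    exact Commute.inv_left_iff.mp (e.injective (hl.trans hr.symm))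
  have hza : e (a⁻¹ * z) = e z * e a⁻¹ :=
    he.apply_mul_eq_right_of_ne e.injective (w := b) (by rw [hz, he.map_inv, inv_mul_cancel_left])
      fun h => hz_ne (inv_mul_eq_iff_eq_mul.mp h)
  -- One candidate value of `e (a⁻¹ * (z * b))`, resp. `e (a * (z * b))`, is `e (b * b)`, resp.
  -- `e (z * z)`, excluded as `z ≠ a * b`; the other is compared with the candidate values of `e`
  -- on the same element written as `b * (a⁻¹ * z)`, resp. `a * b * z`.
  rcases he z b with hzb | hzb
  · have hw : e (b * b) = e a⁻¹ * e (z * b) := by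
      rw [he.map_mul_self, hzb, hz, he.map_inv, mul_assoc, inv_mul_cancel_left]
    have h1 := he.apply_mul_eq_right_of_ne e.injective hw fun h => hz_ne
      (mul_right_cancel ((inv_mul_eq_iff_eq_mul.mp h).trans (mul_assoc a b b).symm))
    have harg : a⁻¹ * (z * b) = b * (a⁻¹ * z) := by
      rw [← hbz.eq, ← mul_assoc, hab.inv_left.eq, mul_assoc]
    rcases he b (a⁻¹ * z) with h2 | h2 <;> rw [← harg, h1, hza, hzb, hz, he.map_inv] at h2
    · exact hxy (mul_right_cancel (b := e b * (e a)⁻¹) (by simpa only [mul_assoc] using h2))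
    · have : e b * (e a)⁻¹ = (e a)⁻¹ * e b :=
        mul_left_cancel (a := e a * e b) (by simpa only [mul_assoc] using h2)
      exact hxy (Commute.inv_right_iff.mp this).symm
  · have hw : e (z * z) = e a * e (z * b) := by rw [he.map_mul_self, hzb, hz, mul_assoc]
    have h1 := he.apply_mul_eq_right_of_ne e.injective hw fun h => hz_ne
      (mul_right_cancel (by rw [mul_assoc, hbz.eq]; exact h)).symm
    have harg : a * (z * b) = a * b * z := by rw [← hbz.eq, mul_assoc]
    rcases he (a * b) z with h2 | h2 <;> rw [← harg, h1, hzb, hz, hrev] at h2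
    · exact hxy (mul_left_cancel (a := e b * e a) (by simpa only [mul_assoc] using h2)).symm
    · exact hxy (mul_right_cancel (b := e b * e a) (by simpa only [mul_assoc] using h2)).symm

theorem commute_apply (he : IsHalfHom e) {a b : G} (hab : Commute a b) :
    Commute (e a) (e b) := by
  rcases he a b with h | h
  · rw [hab.eq] at h
    exact (he.commute_apply_of_apply_mul_rev hab.symm h).symm
  · exact he.commute_apply_of_apply_mul_rev hab h

protected theorem symm (he : IsHalfHom e) : IsHalfHom e.symm := by
  intro x y
  obtain ⟨a, rfl⟩ := e.surjective x
  obtain ⟨b, rfl⟩ := e.surjective y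
  simp only [Equiv.symm_apply_apply, Equiv.symm_apply_eq]
  rcases he a b with hab | hab
  · exact .inl hab.symm
  rcases he b a with hba | hba
  · have hcomm : Commute a b := e.injective (hab.trans hba.symm)
    exact .inl (hab.trans (he.commute_apply hcomm).eq.symm).symm
  · exact .inr hba.symm

end Group

end IsHalfHom

def halfAutomorphisms (G : Type*) [Group G] : Subgroup (Equiv.Perm G) where
  carrier := {τ | IsHalfHom τ}
  mul_mem' hσ hτ := hσ.comp hτ
  one_mem' := IsHalfHom.id
  inv_mem' hτ := hτ.symm

/-- The half-automorphisms of a group form a group under composition: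
they constitute a subgroup of the permutation group of `G`. -/
theorem half_automorphisms_form_group (G : Type*) [Group G] :
    ∃ S : Subgroup (Equiv.Perm G), ∀ τ : Equiv.Perm G,
      τ ∈ S ↔ ∀ x y : G, τ (x * y) = τ x * τ y ∨ τ (x * y) = τ y * τ x :=
  ⟨halfAutomorphisms G, fun _ => Iff.rfl⟩
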